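/- arXiv:1010.2812 — 3 statements merged into one kernel-verified Lean document; each statement's English description precedes it below -/
import Mathlib

section
/- Suppose W A Z = D^{-1} with W lower unitriangular (rows w_i), Z upper unitriangular (columns z_j), D = diag(d_1,...,d_n). If for each j the column z_j is written as z_j = e_j − Σ_{i<j} α_i^{(j)} z_i (which is possible since z_1,...,z_{j−1}, e_j are linearly independent), then α_i^{(j)} = d_i · (w_i A e_j) for all i < j, where A e_j is the j-th column of A. -/
open Matrix BigOperators Finset

def LowerUnitri {n : ℕ} (W : Matrix (Fin n) (Fin n) ℝ) : Prop :=
  (∀ i j : Fin n, i < j → W i j = 0) ∧ (∀ i : Fin n, W i i = 1)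

def UpperUnitri {n : ℕ} (Z : Matrix (Fin n) (Fin n) ℝ) : Prop :=
  (∀ i j : Fin n, j < i → Z i j = 0) ∧ (∀ i : Fin n, Z i i = 1)

/-!
Multiplying the expansion `z_j = e_j - ∑_{i<j} α_i z_i` on the left by the row `w_i A` gives
`(WAZ)_{ij} = (WA)_{ij} - ∑_{i'<j} α_{i'} (WAZ)_{ii'}`. Since `WAZ` is the diagonal matrix
`diag(1/d)`, for `i < j` the left side vanishes and the sum reduces to `α_i / d_i`.
-/

namespace Matrix

variable {R : Type*} [CommRing R] {m n : Type*} [Fintype n] [DecidableEq n]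

theorem mul_apply_of_col_eq_single_sub_sum (M : Matrix m n R) {Z : Matrix n n R}
    {s : Finset n} {c : n → R} {j : n}
    (hZ : ∀ k, Z k j = (if k = j then 1 else 0) - ∑ i ∈ s, c i * Z k i) (r : m) :
    (M * Z) r j = M r j - ∑ i ∈ s, c i * (M * Z) r i := by
  simp only [mul_apply, hZ, mul_sub, mul_ite, mul_one, mul_zero, sum_ite_eq', mem_univ,
    if_true, sum_sub_distrib, mul_sum]
  rw [sum_comm]
  congr 1
  refine sum_congr rfl fun i _ => sum_congr rfl fun k _ => ?_
  ring

theorem coeff_mul_eq_of_mul_eq_diagonal {M Z : Matrix n n R} {e : n → R}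
    (hMZ : M * Z = diagonal e) {s : Finset n} {c : n → R} {j : n}
    (hZ : ∀ k, Z k j = (if k = j then 1 else 0) - ∑ i ∈ s, c i * Z k i)
    {i : n} (hi : i ∈ s) (hij : i ≠ j) :
    c i * e i = M i j := by
  have hcol := M.mul_apply_of_col_eq_single_sub_sum hZ i
  have hsum : ∑ i' ∈ s, c i' * diagonal e i i' = c i * e i := by
    rw [sum_eq_single_of_mem i hi fun i' _ hne => by rw [diagonal_apply_ne _ hne.symm, mul_zero],
      diagonal_apply_eq]
  rw [hMZ, diagonal_apply_ne _ hij, hsum] at hcol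
  exact (sub_eq_zero.mp hcol.symm).symm

theorem inv_diagonal_of_ne_zero {K : Type*} [Field K] {d : n → K} (hd : ∀ i, d i ≠ 0) :
    (diagonal d)⁻¹ = diagonal d⁻¹ :=
  inv_eq_right_inv <| by
    rw [diagonal_mul_diagonal, ← diagonal_one]
    exact congrArg diagonal (funext fun i => mul_inv_cancel₀ (hd i))

end Matrix

theorem stmt3_general {n : ℕ} (A W Z : Matrix (Fin n) (Fin n) ℝ) (d : Fin n → ℝ)
    (α : Fin n → Fin n → ℝ)
    (hd : ∀ i, d i ≠ 0)
    (h : W * A * Z = (Matrix.diagonal d)⁻¹)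
    (hexp : ∀ j k : Fin n,
      Z k j = (if k = j then (1 : ℝ) else 0)
        - ∑ i ∈ Finset.univ.filter (· < j), α i j * Z k i) :
    ∀ i j : Fin n, i < j → α i j = d i * ∑ k, W i k * A k j := by
  intro i j hij
  rw [inv_diagonal_of_ne_zero hd] at h
  have hcoeff := coeff_mul_eq_of_mul_eq_diagonal h (hexp j) (by simpa using hij) hij.ne
  rw [← mul_apply, ← hcoeff, Pi.inv_apply, mul_left_comm, mul_inv_cancel₀ (hd i), mul_one]

theorem stmt3 {n : ℕ} (A W Z : Matrix (Fin n) (Fin n) ℝ) (d : Fin n → ℝ)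
    (α : Fin n → Fin n → ℝ)
    (hW : LowerUnitri W) (hZ : UpperUnitri Z) (hd : ∀ i, d i ≠ 0)
    (h : W * A * Z = (Matrix.diagonal d)⁻¹)
    (hexp : ∀ j k : Fin n,
      Z k j = (if k = j then (1 : ℝ) else 0)
        - ∑ i ∈ Finset.univ.filter (· < j), α i j * Z k i) :
    ∀ i j : Fin n, i < j → α i j = d i * ∑ k, W i k * A k j :=
  stmt3_general A W Z d α hd h hexp
end

section
/- Let A be symmetric positive definite and let W A W^T = D^{-1} with W lower unitriangular and D diagonal. Then for each j, 1/d_j = min over vectors v with v_j = 1 and v_k = 0 for k > j of v^T A v, and in particular 0 < 1/d_j ≤ a_{jj}. -/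
/-!
Substituting `v = u W` turns `v A vᵀ` into `u (W A Wᵀ) uᵀ = ∑ i, u i ^ 2 / d i`. Since `W⁻¹` is again
lower unitriangular, the constraints on `v` (`v j = 1`, zeros beyond `j`) force `u j = 1`, so the form
is at least `1 / d j`, with equality at `u = e_j`, i.e. `v = w_j`. Positivity of `d` comes from
`W A Wᵀ` being positive definite.
-/

open Matrix BigOperators

section QuadraticForm

variable {ι κ R : Type*} [Fintype ι] [Fintype κ]

theorem sum_sum_mul_mul_eq_dotProduct_mulVec [NonUnitalSemiring R] (A : Matrix ι ι R)
    (v : ι → R) : ∑ i, ∑ k, v i * A i k * v k = v ⬝ᵥ A *ᵥ v := by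
  simp only [dotProduct, mulVec, Finset.mul_sum, mul_assoc]

theorem vecMul_dotProduct_mulVec_vecMul [CommSemiring R] (A : Matrix ι ι R) (W : Matrix κ ι R)
    (u : κ → R) : (u ᵥ* W) ⬝ᵥ A *ᵥ (u ᵥ* W) = u ⬝ᵥ (W * A * Wᵀ) *ᵥ u := by
  rw [← dotProduct_mulVec, ← mulVec_transpose, mulVec_mulVec, mulVec_mulVec]

theorem dotProduct_diagonal_mulVec [CommSemiring R] [DecidableEq ι] (c u : ι → R) :
    u ⬝ᵥ diagonal c *ᵥ u = ∑ i, c i * u i ^ 2 := by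
  simp only [dotProduct, mulVec_diagonal]
  exact Finset.sum_congr rfl fun i _ => by ring

end QuadraticForm

theorem Matrix.inv_diagonal_of_ne_zero_s16 {ι K : Type*} [Fintype ι] [DecidableEq ι] [Field K]
    {d : ι → K} (hd : ∀ i, d i ≠ 0) : (diagonal d)⁻¹ = diagonal d⁻¹ := by
  refine inv_eq_right_inv ?_
  rw [diagonal_mul_diagonal, ← diagonal_one]
  exact congrArg diagonal (funext fun i => mul_inv_cancel₀ (hd i))

namespace LowerUnitri

variable {n : ℕ} {W : Matrix (Fin n) (Fin n) ℝ}

theorem isLowerTriangular (hW : LowerUnitri W) : W.IsLowerTriangular :=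
  fun i j hij => hW.1 i j hij

theorem det_eq_one (hW : LowerUnitri W) : W.det = 1 := by
  rw [det_of_isLowerTriangular W hW.isLowerTriangular]
  simp only [hW.2, Finset.prod_const_one]

theorem vecMul_apply_of_forall_lt (hW : LowerUnitri W) {v : Fin n → ℝ} {j : Fin n}
    (hv : ∀ k, j < k → v k = 0) : (v ᵥ* W) j = v j := by
  rw [vecMul, dotProduct, Finset.sum_eq_single j]
  · rw [hW.2, mul_one]
  · intro i _ hij
    rcases hij.lt_or_gt with hlt | hgt
    · rw [hW.1 i j hlt, mul_zero]
    · rw [hv i hgt, zero_mul]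
  · simp

theorem inv (hW : LowerUnitri W) : LowerUnitri W⁻¹ := by
  have : Invertible W := invertibleOfIsUnitDet W (by simp [hW.det_eq_one])
  have hinv : W⁻¹.IsLowerTriangular :=
    blockTriangular_inv_of_blockTriangular hW.isLowerTriangular
  refine ⟨hinv, fun i => ?_⟩
  have hrow : (W⁻¹ i ᵥ* W) i = W⁻¹ i i := hW.vecMul_apply_of_forall_lt fun k hk => hinv hk
  have hone : (W⁻¹ i ᵥ* W) i = 1 := by
    change (W⁻¹ * W) i i = 1
    simp [inv_mul_of_invertible]
  exact hrow.symm.trans hone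

theorem isLeast_dotProduct_mulVec (hW : LowerUnitri W) {A : Matrix (Fin n) (Fin n) ℝ}
    {c : Fin n → ℝ} (hc : ∀ i, 0 ≤ c i) (hWAW : W * A * Wᵀ = diagonal c) (j : Fin n) :
    IsLeast {r : ℝ | ∃ v : Fin n → ℝ, v j = 1 ∧ (∀ k, j < k → v k = 0) ∧
      r = v ⬝ᵥ A *ᵥ v} (c j) := by
  have hquad : ∀ u, (u ᵥ* W) ⬝ᵥ A *ᵥ (u ᵥ* W) = ∑ i, c i * u i ^ 2 := fun u => by
    rw [vecMul_dotProduct_mulVec_vecMul, hWAW, dotProduct_diagonal_mulVec]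
  refine ⟨⟨W j, hW.2 j, fun k hk => hW.1 j k hk, ?_⟩, ?_⟩
  · rw [← show Pi.single j 1 ᵥ* W = W j from single_one_vecMul j W, hquad]
    simp [Pi.single_apply]
  · rintro r ⟨v, hvj, hv, rfl⟩
    set u := v ᵥ* W⁻¹
    have hvu : v = u ᵥ* W := by
      rw [vecMul_vecMul, nonsing_inv_mul W (by simp [hW.det_eq_one]), vecMul_one]
    have huj : u j = 1 := (hW.inv.vecMul_apply_of_forall_lt hv).trans hvj
    calc c j = c j * u j ^ 2 := by rw [huj, one_pow, mul_one]
      _ ≤ ∑ i, c i * u i ^ 2 :=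
        Finset.single_le_sum (f := fun i => c i * u i ^ 2)
          (fun i _ => mul_nonneg (hc i) (sq_nonneg _)) (Finset.mem_univ j)
      _ = v ⬝ᵥ A *ᵥ v := by rw [hvu, hquad]

end LowerUnitri

theorem stmt16 {n : ℕ} (A W : Matrix (Fin n) (Fin n) ℝ) (d : Fin n → ℝ)
    (hA : A.PosDef)
    (hW : LowerUnitri W)
    (h : W * A * Wᵀ = (Matrix.diagonal d)⁻¹) :
    ∀ j : Fin n,
      IsLeast {r : ℝ | ∃ v : Fin n → ℝ, v j = 1 ∧ (∀ k, j < k → v k = 0) ∧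
        r = ∑ i, ∑ k, v i * A i k * v k} (1 / d j) ∧
      0 < 1 / d j ∧ 1 / d j ≤ A j j := by
  intro j
  have hWAW_posDef : (W * A * Wᵀ).PosDef := by
    have hWinj : Function.Injective W.vecMul := by
      rw [vecMul_injective_iff_isUnit, isUnit_iff_isUnit_det, hW.det_eq_one]
      exact isUnit_one
    simpa using hA.mul_mul_conjTranspose_same hWinj
  have hd : ∀ i, 0 < d i := by
    rw [h, posDef_inv_iff, posDef_diagonal_iff] at hWAW_posDef
    exact hWAW_posDef
  have hleast := hW.isLeast_dotProduct_mulVec (c := d⁻¹) (fun i => (inv_pos.2 (hd i)).le)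
    (h.trans (inv_diagonal_of_ne_zero_s16 fun i => (hd i).ne')) j
  simp only [sum_sum_mul_mul_eq_dotProduct_mulVec, one_div]
  refine ⟨hleast, inv_pos.2 (hd j), hleast.2 ⟨Pi.single j 1, by simp,
    fun k hk => by simp [hk.ne'], by simp⟩⟩
end

section
/- Let A be an M-matrix with LDU factorization A = L D^{-1} U (L lower unitriangular, U upper unitriangular, D^{-1} = diag(1/d_1,...,1/d_n)). Then all strict lower entries of L and strict upper entries of U are nonpositive, and 1/d_j > 0 for all j. -/
open Matrix

def IsMmatrix {n : ℕ} (B : Matrix (Fin n) (Fin n) ℝ) : Prop :=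
  (∀ i j : Fin n, i ≠ j → B i j ≤ 0) ∧ IsUnit B.det ∧ (∀ i j : Fin n, 0 ≤ B⁻¹ i j)

/-!
Write `p j = (d j)⁻¹` and `B_m = ∑_{k ≥ m} L_{·k} p_k U_{k·}`, so that `B_0 = A`. Row `m` of `B_m`
is `p_m U_{m·}` and column `m` is `L_{·m} p_m`, hence `B_{m+1} = B_m - L_{·m} (B_m)_{m·}` is the
Schur complement obtained by eliminating index `m` from `B_m`. With `x = A⁻¹ 1 > 0`, the property
"the trailing block of `B_m` is a Z-matrix and sends `x` to a positive vector" survives every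
elimination step and forces the pivot `p_m` to be positive. The signs of `L` and `U` are then read
off column and row `m` of `B_m`.
-/

open Finset

section Elimination

variable {ι R : Type*} [DecidableEq ι] [Field R] [LinearOrder R] [IsStrictOrderedRing R]

/-- The positive vector `x` certifies that the principal submatrix `B[s, s]` is a nonsingular
M-matrix (a semipositive Z-matrix). -/
def IsSemipositiveZOn (s : Finset ι) (B : Matrix ι ι R) (x : ι → R) : Prop :=
  (∀ i ∈ s, ∀ j ∈ s, i ≠ j → B i j ≤ 0) ∧ (∀ j ∈ s, 0 < x j) ∧
    ∀ i ∈ s, 0 < ∑ j ∈ s, B i j * x j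

namespace IsSemipositiveZOn

variable {s : Finset ι} {B : Matrix ι ι R} {x : ι → R} {m : ι}

theorem diag_pos (h : IsSemipositiveZOn s B x) (hm : m ∈ s) : 0 < B m m := by
  obtain ⟨hZ, hx, hB⟩ := h
  have hoff : ∑ j ∈ s.erase m, B m j * x j ≤ 0 := sum_nonpos fun j hj =>
    mul_nonpos_of_nonpos_of_nonneg (hZ m hm j (mem_of_mem_erase hj) (ne_of_mem_erase hj).symm)
      (hx j (mem_of_mem_erase hj)).le
  have hmx : 0 < B m m * x m := by
    have := hB m hm
    rw [← add_sum_erase s _ hm] at this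
    linarith
  exact pos_of_mul_pos_left hmx (hx m hm).le

/-- One step of Gaussian elimination at the pivot `m`. -/
theorem erase (h : IsSemipositiveZOn s B x) (hm : m ∈ s) {B' : Matrix ι ι R} (c : ι → R)
    (hc : ∀ i ∈ s, B i m = c i * B m m) (hB' : ∀ i j, B' i j = B i j - c i * B m j) :
    IsSemipositiveZOn (s.erase m) B' x := by
  have hpivot := h.diag_pos hm
  obtain ⟨hZ, hx, hB⟩ := h
  have hc_nonpos : ∀ i ∈ s.erase m, c i ≤ 0 := fun i hi => by
    have := hZ i (mem_of_mem_erase hi) m hm (ne_of_mem_erase hi)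
    rw [hc i (mem_of_mem_erase hi)] at this
    exact nonpos_of_mul_nonpos_left this hpivot
  refine ⟨fun i hi j hj hij => ?_, fun j hj => hx j (mem_of_mem_erase hj), fun i hi => ?_⟩
  · have := mul_nonneg_of_nonpos_of_nonpos (hc_nonpos i hi)
      (hZ m hm j (mem_of_mem_erase hj) (ne_of_mem_erase hj).symm)
    rw [hB']
    linarith [hZ i (mem_of_mem_erase hi) j (mem_of_mem_erase hj) hij]
  · -- the `m`-th terms cancel because `B i m = c i * B m m`
    have hsum : ∑ j ∈ s.erase m, B' i j * x j
        = ∑ j ∈ s, B i j * x j - c i * ∑ j ∈ s, B m j * x j := by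
      simp only [hB', sub_mul, sum_sub_distrib, mul_assoc, ← mul_sum, sum_erase_eq_sub hm,
        hc i (mem_of_mem_erase hi)]
      ring
    rw [hsum]
    linarith [hB i (mem_of_mem_erase hi),
      mul_nonpos_of_nonpos_of_nonneg (hc_nonpos i hi) (hB m hm).le]

end IsSemipositiveZOn

theorem exists_pos_mulVec_eq_one_of_inv_nonneg [Fintype ι] {A : Matrix ι ι R} (hA : IsUnit A.det)
    (hinv : ∀ i j, 0 ≤ A⁻¹ i j) : ∃ x : ι → R, (∀ i, 0 < x i) ∧ A *ᵥ x = 1 := by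
  refine ⟨A⁻¹ *ᵥ 1, fun i => ?_, by rw [mulVec_mulVec, mul_nonsing_inv A hA, one_mulVec]⟩
  have hrow : 0 ≤ (A⁻¹ *ᵥ 1) i := sum_nonneg fun k _ => by simpa using hinv i k
  refine hrow.lt_of_ne fun hzero => ?_
  -- a zero row of `A⁻¹` would make `(A⁻¹ * A) i i = 0`
  have hzero_row : ∀ k, A⁻¹ i k = 0 := fun k => by
    have := (sum_eq_zero_iff_of_nonneg fun k _ => by simpa using hinv i k).1 hzero.symm k
      (mem_univ k)
    simpa using this
  have := congr_fun (congr_fun (nonsing_inv_mul A hA) i) i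
  simp [mul_apply, hzero_row] at this

end Elimination

section LDU

variable {ι R : Type*} [DecidableEq ι] [CommRing R]

def partialLDU (L : Matrix ι ι R) (p : ι → R) (U : Matrix ι ι R) (s : Finset ι) :
    Matrix ι ι R :=
  Matrix.of fun i j => ∑ k ∈ s, L i k * p k * U k j

variable {L U : Matrix ι ι R} {p : ι → R}

theorem partialLDU_univ [Fintype ι] : partialLDU L p U univ = L * diagonal p * U := by
  ext i j
  simp [partialLDU, mul_apply, diagonal_apply]

theorem partialLDU_erase {s : Finset ι} {m : ι} (hm : m ∈ s) (i j : ι) :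
    partialLDU L p U (s.erase m) i j = partialLDU L p U s i j - L i m * p m * U m j :=
  sum_erase_eq_sub hm

end LDU

theorem Fin.Ici_castSucc_erase {n : ℕ} (i : Fin n) :
    (Ici i.castSucc).erase i.castSucc = Ici i.succ := by
  ext j
  simp [Ici_erase, Fin.castSucc_lt_iff_succ_le]

section Triangular

variable {n : ℕ} {L U : Matrix (Fin n) (Fin n) ℝ} {p : Fin n → ℝ}

theorem partialLDU_Ici_row (hL : LowerUnitri L) (m j : Fin n) :
    partialLDU L p U (Ici m) m j = p m * U m j := by
  rw [partialLDU, of_apply, sum_eq_single_of_mem m (mem_Ici.2 le_rfl) fun k hk hkm =>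
    by rw [hL.1 m k (lt_of_le_of_ne (mem_Ici.1 hk) (Ne.symm hkm)), zero_mul, zero_mul], hL.2,
    one_mul]

theorem partialLDU_Ici_col (hU : UpperUnitri U) (i m : Fin n) :
    partialLDU L p U (Ici m) i m = L i m * p m := by
  rw [partialLDU, of_apply, sum_eq_single_of_mem m (mem_Ici.2 le_rfl) fun k hk hkm =>
    by rw [hU.1 k m (lt_of_le_of_ne (mem_Ici.1 hk) (Ne.symm hkm)), mul_zero], hU.2, mul_one]

theorem isSemipositiveZOn_partialLDU_Ici (hL : LowerUnitri L) (hU : UpperUnitri U) {x : Fin n → ℝ}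
    (h0 : IsSemipositiveZOn univ (L * diagonal p * U) x) (m : Fin n) :
    IsSemipositiveZOn (Ici m) (partialLDU L p U (Ici m)) x := by
  cases n with
  | zero => exact m.elim0
  | succ n =>
    induction m using Fin.induction with
    | zero => rwa [← bot_eq_zero, Ici_bot, partialLDU_univ]
    | succ i ih =>
      rw [← Fin.Ici_castSucc_erase]
      refine ih.erase (mem_Ici.2 le_rfl) (fun k => L k i.castSucc) (fun k _ => ?_) fun k j => ?_
      · rw [partialLDU_Ici_col hU, partialLDU_Ici_row hL, hU.2, mul_one]
      · rw [partialLDU_erase (mem_Ici.2 le_rfl), partialLDU_Ici_row hL, mul_assoc]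

end Triangular

theorem stmt17_general {n : ℕ} (A L U : Matrix (Fin n) (Fin n) ℝ) (d : Fin n → ℝ)
    (hA : IsMmatrix A)
    (hL : LowerUnitri L) (hU : UpperUnitri U)
    (h : A = L * Matrix.diagonal (fun j => (d j)⁻¹) * U) :
    (∀ i j : Fin n, j < i → L i j ≤ 0) ∧ (∀ i j : Fin n, i < j → U i j ≤ 0) ∧
      (∀ j : Fin n, 0 < (d j)⁻¹) := by
  obtain ⟨hZ, hdet, hinv⟩ := hA
  obtain ⟨x, hx, hAx⟩ := exists_pos_mulVec_eq_one_of_inv_nonneg hdet hinv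
  have h0 : IsSemipositiveZOn univ A x :=
    ⟨fun i _ j _ => hZ i j, fun j _ => hx j, fun i _ => by
      have hrow : ∑ j, A i j * x j = 1 := by simpa [mulVec, dotProduct] using congr_fun hAx i
      exact hrow ▸ one_pos⟩
  rw [h] at h0
  have hB := isSemipositiveZOn_partialLDU_Ici hL hU h0
  have hpivot : ∀ j, 0 < (d j)⁻¹ := fun j => by
    simpa [partialLDU_Ici_row hL, hU.2] using (hB j).diag_pos (mem_Ici.2 le_rfl)
  refine ⟨fun i j hji => ?_, fun i j hij => ?_, hpivot⟩
  · have := (hB j).1 i (mem_Ici.2 hji.le) j (mem_Ici.2 le_rfl) hji.ne'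
    rw [partialLDU_Ici_col hU] at this
    exact nonpos_of_mul_nonpos_left this (hpivot j)
  · have := (hB i).1 i (mem_Ici.2 le_rfl) j (mem_Ici.2 hij.le) hij.ne
    rw [partialLDU_Ici_row hL] at this
    exact nonpos_of_mul_nonpos_right this (hpivot i)

theorem stmt17 {n : ℕ} (A L U : Matrix (Fin n) (Fin n) ℝ) (d : Fin n → ℝ)
    (hA : IsMmatrix A)
    (hL : LowerUnitri L) (hU : UpperUnitri U) (hd : ∀ i, d i ≠ 0)
    (h : A = L * Matrix.diagonal (fun j => (d j)⁻¹) * U) :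
    (∀ i j : Fin n, j < i → L i j ≤ 0) ∧ (∀ i j : Fin n, i < j → U i j ≤ 0) ∧
      (∀ j : Fin n, 0 < (d j)⁻¹) :=
  stmt17_general A L U d hA hL hU h
end
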